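/- Let q₁ ∈ (0,1) and let A be inverse Gaussian with parameters (1,c²), and define t* = sup{t ∈ ℝ : E[A^t] q₁ ≤ 1}. If q₁ E[A^{−1/2}] > 1, then 1 < t* < 3/2. -/

import Mathlib

open MeasureTheory Real

/-- Density of the inverse Gaussian distribution with parameters `(1, c²)`. -/
noncomputable def igDensity (c x : ℝ) : ℝ :=
  if 0 ≤ x then c / Real.sqrt (2 * Real.pi * x ^ 3) * Real.exp (-(c ^ 2 * (x - 1) ^ 2) / (2 * x))
  else 0

/-- The inverse Gaussian distribution with parameters `(1, c²)` as a measure on `ℝ`. -/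
noncomputable def igMeasure (c : ℝ) : Measure ℝ :=
  volume.withDensity fun x => ENNReal.ofReal (igDensity c x)

/-- `E[A^t]` for `A` inverse Gaussian with parameters `(1, c²)`. -/
noncomputable def igMoment (c t : ℝ) : ℝ := ∫ x, x ^ t ∂(igMeasure c)

/-- `t* = sup {t ∈ ℝ : E[A^t] q₁ ≤ 1}`. -/
noncomputable def tStar (c q₁ : ℝ) : ℝ := sSup {t : ℝ | igMoment c t * q₁ ≤ 1}

open Set Topology

/-!
Write `M t = E[A ^ t]`. The substitution `x ↦ x⁻¹` maps the density `f` to `x ^ 3 f`, which gives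
the symmetry `M (1 - t) = M t`; the substitution `u = c (√x - 1 / √x)` carries `(1 + x) f x dx` to
twice the standard normal density, so `M 0 + M 1 = 2` and hence `M 0 = M 1 = 1`. As `t ↦ x ^ t` is
convex, `M` is convex, hence continuous, and by the symmetry it is nondecreasing on `[1/2, ∞)`.
Now `q₁ M 1 = q₁ < 1` while `q₁ M (3/2) = q₁ M (-1/2) > 1`: by continuity the sublevel set
`{t | q₁ M t ≤ 1}` contains a point beyond `1`, and by monotonicity it stays below a point before
`3/2`.
-/

theorem sSup_setOf_le_mem_Ioo {f : ℝ → ℝ} {m a b y : ℝ} (hfa : ContinuousAt f a)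
    (hfb : ContinuousAt f b) (hf : MonotoneOn f (Ici m)) (hmb : m < b) (ha : f a < y)
    (hb : y < f b) : sSup {t | f t ≤ y} ∈ Ioo a b := by
  obtain ⟨s, ⟨hms, hsb⟩, hys⟩ : ∃ s ∈ Ioo m b, y < f s :=
    (Filter.Eventually.and (Ioo_mem_nhdsLT hmb)
      (nhdsWithin_le_nhds (hfb.eventually (lt_mem_nhds hb)))).exists
  obtain ⟨r, har, hry⟩ : ∃ r, a < r ∧ f r < y :=
    (Filter.Eventually.and (self_mem_nhdsWithin : Ioi a ∈ 𝓝[>] a)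
      (nhdsWithin_le_nhds (hfa.eventually (gt_mem_nhds ha)))).exists
  have hle : ∀ t ∈ {t | f t ≤ y}, t ≤ s := fun t ht => by
    by_contra! hst
    exact (hys.trans_le (hf hms.le (hms.trans hst).le hst.le)).not_ge ht
  exact ⟨har.trans_le (le_csSup ⟨s, hle⟩ hry.le), (csSup_le ⟨r, hry.le⟩ hle).trans_lt hsb⟩

theorem integrableOn_image_inv_iff {E : Type*} [NormedAddCommGroup E] [NormedSpace ℝ E]
    {s : Set ℝ} (hs : MeasurableSet s) (hs0 : 0 ∉ s) (g : ℝ → E) :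
    IntegrableOn g (Inv.inv '' s) ↔ IntegrableOn (fun x => (x ^ 2)⁻¹ • g x⁻¹) s := by
  rw [integrableOn_image_iff_integrableOn_abs_deriv_smul hs
    (fun x hx => (hasDerivAt_inv (ne_of_mem_of_not_mem hx hs0)).hasDerivWithinAt)
    inv_injective.injOn]
  simp only [abs_neg, abs_inv, abs_pow, sq_abs]

theorem integral_image_inv {E : Type*} [NormedAddCommGroup E] [NormedSpace ℝ E]
    {s : Set ℝ} (hs : MeasurableSet s) (hs0 : 0 ∉ s) (g : ℝ → E) :
    ∫ x in Inv.inv '' s, g x = ∫ x in s, (x ^ 2)⁻¹ • g x⁻¹ := by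
  rw [integral_image_eq_integral_abs_deriv_smul hs
    (fun x hx => (hasDerivAt_inv (ne_of_mem_of_not_mem hx hs0)).hasDerivWithinAt)
    inv_injective.injOn]
  simp only [abs_neg, abs_inv, abs_pow, sq_abs]

lemma igDensity_nonneg {c : ℝ} (hc : 0 ≤ c) (x : ℝ) : 0 ≤ igDensity c x := by
  unfold igDensity
  split_ifs <;> positivity

lemma igDensity_of_nonpos (c : ℝ) {x : ℝ} (hx : x ≤ 0) : igDensity c x = 0 := by
  rcases hx.lt_or_eq with hx | rfl
  · exact if_neg hx.not_ge
  · simp [igDensity]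

lemma measurable_igDensity (c : ℝ) : Measurable (igDensity c) :=
  Measurable.ite measurableSet_Ici (by fun_prop) (by fun_prop)

lemma igDensity_inv (c : ℝ) {x : ℝ} (hx : 0 < x) : igDensity c x⁻¹ = x ^ 3 * igDensity c x := by
  have hsqrt : √(2 * π * x⁻¹ ^ 3) = √(2 * π * x ^ 3) / x ^ 3 := by
    rw [div_eq_mul_inv, ← sqrt_sq (inv_nonneg.2 (pow_nonneg hx.le 3)), ← sqrt_mul (by positivity)]
    congr 1
    field_simp
  have hexp : -(c ^ 2 * (x⁻¹ - 1) ^ 2) / (2 * x⁻¹) = -(c ^ 2 * (x - 1) ^ 2) / (2 * x) := by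
    field_simp
    ring
  simp only [igDensity, if_pos hx.le, if_pos (inv_nonneg.2 hx.le), hsqrt, hexp]
  field_simp

lemma igMoment_eq_setIntegral {c : ℝ} (hc : 0 ≤ c) (t : ℝ) :
    igMoment c t = ∫ x in Ioi 0, x ^ t * igDensity c x := by
  rw [igMoment, igMeasure, integral_withDensity_eq_integral_toReal_smul
    (measurable_igDensity c).ennreal_ofReal (ae_of_all _ fun _ => ENNReal.ofReal_lt_top),
    ← setIntegral_eq_integral_of_forall_compl_eq_zero]
  · refine setIntegral_congr_fun measurableSet_Ioi fun x _ => ?_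
    rw [ENNReal.toReal_ofReal (igDensity_nonneg hc x), smul_eq_mul, mul_comm]
  · intro x hx
    rw [igDensity_of_nonpos c (not_lt.1 hx), ENNReal.ofReal_zero, ENNReal.toReal_zero, zero_smul]

lemma inv_sq_smul_rpow_inv_mul_igDensity_inv (c t : ℝ) {x : ℝ} (hx : 0 < x) :
    (x ^ 2)⁻¹ • (x⁻¹ ^ t * igDensity c x⁻¹) = x ^ (1 - t) * igDensity c x := by
  rw [igDensity_inv c hx, inv_rpow hx.le, rpow_sub hx, rpow_one, smul_eq_mul]
  have := rpow_pos_of_pos hx t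
  field_simp

lemma igDensity_le_of_one_le {c x : ℝ} (hc : 0 ≤ c) (hx : 1 ≤ x) :
    igDensity c x ≤ c / √(2 * π) * exp (c ^ 2) * exp (-(c ^ 2 / 2) * x) := by
  have hx0 : 0 < x := one_pos.trans_le hx
  rw [mul_assoc (c / √(2 * π)), ← exp_add, igDensity, if_pos hx0.le]
  refine mul_le_mul (div_le_div_of_nonneg_left hc (by positivity)
    (sqrt_le_sqrt (le_mul_of_one_le_right (by positivity) (one_le_pow₀ hx))))
    (exp_le_exp.2 ?_) (exp_pos _).le (by positivity)
  rw [div_le_iff₀ (by positivity)]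
  nlinarith [sq_nonneg c]

lemma integrableOn_Ici_one_rpow_mul_igDensity {c : ℝ} (hc : 0 < c) (t : ℝ) :
    IntegrableOn (fun x => x ^ t * igDensity c x) (Ici 1) := by
  have hbound : IntegrableOn
      (fun x => c / √(2 * π) * exp (c ^ 2) * (x ^ |t| * exp (-(c ^ 2 / 2) * x ^ (1 : ℝ))))
      (Ici 1) :=
    ((integrableOn_rpow_mul_exp_neg_mul_rpow (by linarith [abs_nonneg t]) one_pos
      (by positivity)).mono_set (Ici_subset_Ioi.2 one_pos)).const_mul _
  refine hbound.mono'
    ((measurable_id.pow_const t).mul (measurable_igDensity c)).aestronglyMeasurable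
    ((ae_restrict_iff' measurableSet_Ici).2 (ae_of_all _ fun x (hx : 1 ≤ x) => ?_))
  have hx0 : 0 < x := one_pos.trans_le hx
  rw [norm_of_nonneg (mul_nonneg (rpow_nonneg hx0.le t) (igDensity_nonneg hc.le x)), rpow_one]
  calc x ^ t * igDensity c x
      ≤ x ^ |t| * (c / √(2 * π) * exp (c ^ 2) * exp (-(c ^ 2 / 2) * x)) :=
        mul_le_mul (rpow_le_rpow_of_exponent_le hx (le_abs_self t))
          (igDensity_le_of_one_le hc.le hx) (igDensity_nonneg hc.le x) (by positivity)
    _ = _ := by ring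

lemma integrableOn_rpow_mul_igDensity {c : ℝ} (hc : 0 < c) (t : ℝ) :
    IntegrableOn (fun x => x ^ t * igDensity c x) (Ioi 0) := by
  have himage : Inv.inv '' Ioi (1 : ℝ) = Ioo 0 1 := by
    rw [image_inv_eq_inv, inv_Ioi₀ one_pos, inv_one]
  rw [← Ioo_union_Ici_eq_Ioi one_pos, ← himage]
  refine IntegrableOn.union ?_ (integrableOn_Ici_one_rpow_mul_igDensity hc t)
  rw [integrableOn_image_inv_iff measurableSet_Ioi (by norm_num)]
  exact ((integrableOn_Ici_one_rpow_mul_igDensity hc (1 - t)).mono_set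
    Ioi_subset_Ici_self).congr_fun
    (fun x hx => (inv_sq_smul_rpow_inv_mul_igDensity_inv c t (one_pos.trans hx)).symm)
    measurableSet_Ioi

lemma igMoment_one_sub {c : ℝ} (hc : 0 ≤ c) (t : ℝ) : igMoment c (1 - t) = igMoment c t := by
  have himage : Inv.inv '' Ioi (0 : ℝ) = Ioi 0 := by
    ext; simp
  rw [igMoment_eq_setIntegral hc, igMoment_eq_setIntegral hc]
  conv_rhs => rw [← himage, integral_image_inv measurableSet_Ioi self_notMem_Ioi]
  exact setIntegral_congr_fun measurableSet_Ioi fun x hx =>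
    (inv_sq_smul_rpow_inv_mul_igDensity_inv c t hx).symm

/-- The substitution carrying `(1 + x) * igDensity c x` to twice the standard normal density. -/
noncomputable def igU (c x : ℝ) : ℝ := c * (√x - (√x)⁻¹)

lemma hasDerivAt_igU (c : ℝ) {x : ℝ} (hx : 0 < x) :
    HasDerivAt (igU c) (c * (1 + x) / (2 * x * √x)) x := by
  have hs : 0 < √x := sqrt_pos.2 hx
  have hsqrt := hasDerivAt_sqrt hx.ne'
  refine ((hsqrt.sub (hsqrt.inv hs.ne')).const_mul c).congr_deriv ?_
  rw [sq_sqrt hx.le]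
  field_simp
  ring

lemma strictMonoOn_igU {c : ℝ} (hc : 0 < c) : StrictMonoOn (igU c) (Ioi 0) := by
  intro x (hx : 0 < x) y _ hxy
  have hsqrt : √x < √y := sqrt_lt_sqrt hx.le hxy
  have hinv : (√y)⁻¹ < (√x)⁻¹ := inv_strictAnti₀ (sqrt_pos.2 hx) hsqrt
  unfold igU
  gcongr

lemma igU_image_Ioi {c : ℝ} (hc : c ≠ 0) : igU c '' Ioi 0 = univ := by
  refine eq_univ_of_forall fun y => ?_
  obtain ⟨r, rfl⟩ : ∃ r, y = c * r := ⟨y / c, by field_simp⟩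
  have hD : √(r ^ 2 + 4) ^ 2 = r ^ 2 + 4 := sq_sqrt (by positivity)
  have hrD : |r| < √(r ^ 2 + 4) := by
    rw [← sqrt_sq_eq_abs]
    exact sqrt_lt_sqrt (sq_nonneg _) (by linarith)
  obtain ⟨s, hs, hsq⟩ : ∃ s : ℝ, 0 < s ∧ s ^ 2 = r * s + 1 :=
    ⟨(r + √(r ^ 2 + 4)) / 2, by linarith [neg_le_abs r], by nlinarith⟩
  refine ⟨s ^ 2, pow_pos hs 2, ?_⟩
  rw [igU, sqrt_sq hs.le]
  field_simp
  linear_combination hsq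

lemma one_add_mul_igDensity (c : ℝ) {x : ℝ} (hx : 0 < x) :
    (1 + x) * igDensity c x =
      2 / √(2 * π) * (c * (1 + x) / (2 * x * √x) * exp (-(1 / 2) * igU c x ^ 2)) := by
  have hs : 0 < √x := sqrt_pos.2 hx
  have hs2 : √x ^ 2 = x := sq_sqrt hx.le
  have hsqrt : √(2 * π * x ^ 3) = √(2 * π) * (x * √x) := by
    rw [sqrt_mul (by positivity), show x ^ 3 = (x * √x) ^ 2 by rw [mul_pow, hs2]; ring,
      sqrt_sq (by positivity)]
  have hexp : -(c ^ 2 * (x - 1) ^ 2) / (2 * x) = -(1 / 2) * igU c x ^ 2 := by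
    rw [igU, mul_pow, sub_sq (√x), inv_pow, hs2, mul_assoc 2, mul_inv_cancel₀ hs.ne']
    field_simp
    ring
  rw [igDensity, if_pos hx.le, hsqrt, hexp]
  field_simp

lemma igMoment_zero_add_igMoment_one {c : ℝ} (hc : 0 < c) : igMoment c 0 + igMoment c 1 = 2 := by
  have hgauss : ∫ y, exp (-(1 / 2) * y ^ 2) = √(2 * π) := by
    rw [integral_gaussian, show π / (1 / 2) = 2 * π by ring]
  rw [igMoment_eq_setIntegral hc.le, igMoment_eq_setIntegral hc.le,
    ← integral_add (integrableOn_rpow_mul_igDensity hc 0) (integrableOn_rpow_mul_igDensity hc 1)]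
  calc ∫ x in Ioi 0, x ^ (0 : ℝ) * igDensity c x + x ^ (1 : ℝ) * igDensity c x
      = ∫ x in Ioi 0, 2 / √(2 * π) *
          (|c * (1 + x) / (2 * x * √x)| • exp (-(1 / 2) * igU c x ^ 2)) := by
        refine setIntegral_congr_fun measurableSet_Ioi fun x (hx : 0 < x) => ?_
        rw [rpow_zero, rpow_one, ← add_mul, one_add_mul_igDensity c hx, smul_eq_mul,
          abs_of_pos (by positivity)]
    _ = 2 / √(2 * π) * ∫ y in igU c '' Ioi 0, exp (-(1 / 2) * y ^ 2) := by
        rw [integral_const_mul, integral_image_eq_integral_abs_deriv_smul measurableSet_Ioi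
          (fun x hx => (hasDerivAt_igU c hx).hasDerivWithinAt) (strictMonoOn_igU hc).injOn]
    _ = 2 := by
        rw [igU_image_Ioi hc.ne', Measure.restrict_univ, hgauss]
        field_simp

lemma igMoment_one {c : ℝ} (hc : 0 < c) : igMoment c 1 = 1 := by
  have hsymm := igMoment_one_sub hc.le 1
  rw [sub_self] at hsymm
  linarith [igMoment_zero_add_igMoment_one hc]

lemma convexOn_igMoment {c : ℝ} (hc : 0 < c) : ConvexOn ℝ univ (igMoment c) := by
  refine ⟨convex_univ, fun p _ q _ a b ha hb hab => ?_⟩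
  have hint := integrableOn_rpow_mul_igDensity hc
  simp only [smul_eq_mul, igMoment_eq_setIntegral hc.le]
  rw [← integral_const_mul, ← integral_const_mul,
    ← integral_add ((hint p).const_mul a) ((hint q).const_mul b)]
  refine setIntegral_mono_on (hint _) (((hint p).const_mul a).add ((hint q).const_mul b))
    measurableSet_Ioi fun x (hx : 0 < x) => ?_
  have hrpow := (convexOn_rpow_left hx).2 (mem_univ p) (mem_univ q) ha hb hab
  simp only [smul_eq_mul] at hrpow
  calc x ^ (a * p + b * q) * igDensity c x ≤ (a * x ^ p + b * x ^ q) * igDensity c x :=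
        mul_le_mul_of_nonneg_right hrpow (igDensity_nonneg hc.le x)
    _ = a * (x ^ p * igDensity c x) + b * (x ^ q * igDensity c x) := by ring

lemma continuous_igMoment {c : ℝ} (hc : 0 < c) : Continuous (igMoment c) :=
  continuousOn_univ.1 ((convexOn_igMoment hc).continuousOn isOpen_univ)

lemma monotoneOn_igMoment {c : ℝ} (hc : 0 < c) : MonotoneOn (igMoment c) (Ici (1 / 2)) := by
  intro s (hs : 1 / 2 ≤ s) t (ht : 1 / 2 ≤ t) hst
  have hseg : s ∈ segment ℝ (1 - t) t := by
    rw [segment_eq_Icc (by linarith)]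
    exact ⟨by linarith, hst⟩
  calc igMoment c s ≤ max (igMoment c (1 - t)) (igMoment c t) :=
        (convexOn_igMoment hc).le_on_segment (mem_univ _) (mem_univ _) hseg
    _ = igMoment c t := by rw [igMoment_one_sub hc.le, max_self]

/-- If `q₁ ∈ (0,1)` and `q₁ E[A^{−1/2}] > 1`, then `1 < t* < 3/2`. -/
theorem tStar_between_one_and_three_halves (c q₁ : ℝ) (hc : 0 < c)
    (hq₁ : 0 < q₁) (hq₁' : q₁ < 1) (h : 1 < q₁ * igMoment c (-(1 / 2))) :
    1 < tStar c q₁ ∧ tStar c q₁ < 3 / 2 := by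
  have hcont : Continuous fun t => igMoment c t * q₁ :=
    (continuous_igMoment hc).mul continuous_const
  have h32 : igMoment c (3 / 2) = igMoment c (-(1 / 2)) := by
    rw [← igMoment_one_sub hc.le]
    norm_num
  exact sSup_setOf_le_mem_Ioo hcont.continuousAt hcont.continuousAt
    (fun s hs t ht hst => mul_le_mul_of_nonneg_right (monotoneOn_igMoment hc hs ht hst) hq₁.le)
    (by norm_num : (1 / 2 : ℝ) < 3 / 2) (by rwa [igMoment_one hc, one_mul])
    (by rwa [h32, mul_comm])
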